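/- arXiv:1707.02171 — 2 statements merged into one kernel-verified Lean document; each statement's English description precedes it below -/
import Mathlib

section
/- Let p = ⟨V_1, …, V_n⟩ be a b-possibly causal definite status path in a maximal PDAG G. If there exists an index i ∈ {1, …, n−1} such that the edge V_i → V_{i+1} is in G, then the subpath p(V_i, V_n) = ⟨V_i, V_{i+1}, …, V_n⟩ is a causal (fully directed) path in G. -/
/-- A partially directed graph with at most one edge between any two nodes
and no directed cycles (a PDAG). -/
structure PDAG (V : Type) where
  dir : V → V → Prop
  undir : V → V → Prop
  undir_symm : ∀ {x y}, undir x y → undir y x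
  undir_irrefl : ∀ x, ¬ undir x x
  dir_not_undir : ∀ x y, dir x y → ¬ undir x y
  acyclic : ∀ x, ¬ Relation.TransGen dir x x

namespace PDAG

variable {V : Type}

/-- There is an undirected edge between `x` and `y`. -/
def undirE (G : PDAG V) (x y : V) : Prop := G.undir x y ∨ G.undir y x

/-- `x` and `y` are adjacent. -/
def adj (G : PDAG V) (x y : V) : Prop := G.dir x y ∨ G.dir y x ∨ G.undirE x y

/-- The list of consecutive pairs of a list. -/
def consPairs (p : List V) : List (V × V) := p.zip p.tail

/-- The list of consecutive triples of a list. -/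
def triples : List V → List (V × V × V)
  | a :: b :: c :: rest => (a, b, c) :: triples (b :: c :: rest)
  | _ => []

/-- `p` is a path in `G`: at least two distinct nodes, pairwise successive adjacency. -/
def IsPath (G : PDAG V) (p : List V) : Prop :=
  2 ≤ p.length ∧ p.Nodup ∧ ∀ e ∈ consPairs p, G.adj e.1 e.2

/-- `p` is a path in `G` from `x` to `y`. -/
def PathFromTo (G : PDAG V) (p : List V) (x y : V) : Prop :=
  G.IsPath p ∧ p.head? = some x ∧ p.getLast? = some y

/-- `p` is a causal (fully directed) path in `G`. -/
def IsCausal (G : PDAG V) (p : List V) : Prop :=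
  2 ≤ p.length ∧ p.Nodup ∧ ∀ e ∈ consPairs p, G.dir e.1 e.2

/-- `p` is a non-causal path: it contains at least one edge directed backwards. -/
def NonCausal (G : PDAG V) (p : List V) : Prop :=
  G.IsPath p ∧ ∃ e ∈ consPairs p, G.dir e.2 e.1

/-- `p` is b-possibly causal in `G`: there is no edge `V_i ← V_j` for `i < j`. -/
def BPossCausal (G : PDAG V) (p : List V) : Prop :=
  G.IsPath p ∧ ∀ i j : Fin p.length, (i : ℕ) < (j : ℕ) → ¬ G.dir (p.get j) (p.get i)

/-- `p` is b-non-causal in `G`: some edge `V_i ← V_j` with `i < j` exists in `G`. -/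
def BNonCausal (G : PDAG V) (p : List V) : Prop :=
  G.IsPath p ∧ ∃ i j : Fin p.length, (i : ℕ) < (j : ℕ) ∧ G.dir (p.get j) (p.get i)

/-- A path with no edge on it pointing backwards (possibly causal in the local sense). -/
def LocalPossCausal (G : PDAG V) (p : List V) : Prop :=
  G.IsPath p ∧ ∀ e ∈ consPairs p, ¬ G.dir e.2 e.1

/-- `p` is unshielded: the outer nodes of every consecutive triple are non-adjacent. -/
def Unshielded (G : PDAG V) (p : List V) : Prop :=
  ∀ t ∈ triples p, ¬ G.adj t.1 t.2.2

/-- The middle node of a triple is a collider. -/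
def ColliderAt (G : PDAG V) (t : V × V × V) : Prop :=
  G.dir t.1 t.2.1 ∧ G.dir t.2.2 t.2.1

/-- The middle node of a triple is a definite non-collider. -/
def DefNonColliderAt (G : PDAG V) (t : V × V × V) : Prop :=
  G.dir t.2.1 t.1 ∨ G.dir t.2.1 t.2.2 ∨
    (G.undirE t.1 t.2.1 ∧ G.undirE t.2.1 t.2.2 ∧ ¬ G.adj t.1 t.2.2)

/-- `p` is a definite status path. -/
def DefiniteStatus (G : PDAG V) (p : List V) : Prop :=
  ∀ t ∈ triples p, G.ColliderAt t ∨ G.DefNonColliderAt t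

/-- `y` is a descendant of `x` in `G` (via directed paths; every node descends from itself). -/
def Desc (G : PDAG V) (x y : V) : Prop := x = y ∨ Relation.TransGen G.dir x y

/-- `p` is d-connecting given `Z`: every collider on `p` has a descendant in `Z`,
and every (definite) non-collider on `p` is not in `Z`. -/
def DConn (G : PDAG V) (p : List V) (Z : Set V) : Prop :=
  ∀ t ∈ triples p,
    (G.ColliderAt t → ∃ z ∈ Z, G.Desc t.2.1 z) ∧ (¬ G.ColliderAt t → t.2.1 ∉ Z)

/-- `Z` blocks the path `p`. -/
def Blocked (G : PDAG V) (p : List V) (Z : Set V) : Prop := ¬ G.DConn p Z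

/-- `G` is closed under Meek's orientation rules R1–R4 (a maximal PDAG). -/
def ClosedMeek (G : PDAG V) : Prop :=
  (∀ a b c, G.dir a b → G.undirE b c → ¬ G.adj a c → G.dir b c) ∧
  (∀ a b c, G.dir a b → G.dir b c → G.undirE a c → G.dir a c) ∧
  (∀ a b c d, G.undirE a b → G.undirE a c → G.undirE a d →
     G.dir c b → G.dir d b → ¬ G.adj c d → G.dir a b) ∧
  (∀ a b c d, G.undirE a b → G.undirE a c → G.undirE a d →
     G.dir d c → G.dir b d → ¬ G.adj b c → G.dir a c)

/-- `G` is a DAG: it has no undirected edges. -/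
def IsDAG (G : PDAG V) : Prop := ∀ x y, ¬ G.undir x y

/-- `G` and `H` have the same unshielded colliders. -/
def SameUC (G H : PDAG V) : Prop :=
  ∀ a b c, (G.dir a b ∧ G.dir c b ∧ ¬ G.adj a c) ↔ (H.dir a b ∧ H.dir c b ∧ ¬ H.adj a c)

/-- `H` is represented by `G`: same adjacencies, same unshielded colliders,
and every directed edge of `G` is in `H`. -/
def RepresentedBy (H G : PDAG V) : Prop :=
  (∀ x y, H.adj x y ↔ G.adj x y) ∧ SameUC H G ∧ ∀ x y, G.dir x y → H.dir x y

/-- `p` is a proper path from (a member of) `X` to (a member of) `Y`: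
only its first node lies in `X`. -/
def ProperPathFromTo (G : PDAG V) (X Y : Set V) (p : List V) : Prop :=
  G.IsPath p ∧ (∃ x ∈ X, p.head? = some x) ∧ (∃ y ∈ Y, p.getLast? = some y) ∧
    ∀ v ∈ p.tail, v ∉ X

/-- `w'` is a b-possible descendant of the node `w`. -/
def BPossDescNode (G : PDAG V) (w w' : V) : Prop :=
  w' = w ∨ ∃ p, G.BPossCausal p ∧ p.head? = some w ∧ p.getLast? = some w'

/-- The b-possible descendants of the node set `X` in `G`. -/
def BPossDe (G : PDAG V) (X : Set V) : Set V :=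
  {w | w ∈ X ∨ ∃ x ∈ X, ∃ p, G.BPossCausal p ∧ p.head? = some x ∧ p.getLast? = some w}

/-- The b-possible ancestors of the node set `X` in `G`. -/
def BPossAn (G : PDAG V) (X : Set V) : Set V :=
  {w | w ∈ X ∨ ∃ x ∈ X, ∃ p, G.BPossCausal p ∧ p.head? = some w ∧ p.getLast? = some x}

/-- The b-forbidden set relative to `(X, Y)` in `G`. -/
def BForb (G : PDAG V) (X Y : Set V) : Set V :=
  {w' | ∃ w p, w ∉ X ∧ G.ProperPathFromTo X Y p ∧ G.BPossCausal p ∧ w ∈ p ∧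
    G.BPossDescNode w w'}

/-- `G` is b-amenable relative to `(X, Y)`: every proper b-possibly causal path
from `X` to `Y` starts with a directed edge out of `X`. -/
def BAmenable (G : PDAG V) (X Y : Set V) : Prop :=
  ∀ p, G.ProperPathFromTo X Y p → G.BPossCausal p →
    ∀ a b, p.head? = some a → p.tail.head? = some b → G.dir a b

/-- The b-blocking condition: `Z` blocks every proper b-non-causal definite status
path from `X` to `Y` in `G`. -/
def BBlocking (G : PDAG V) (X Y Z : Set V) : Prop :=
  ∀ p, G.ProperPathFromTo X Y p → G.BNonCausal p → G.DefiniteStatus p → G.Blocked p Z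

/-- The b-adjustment criterion for `Z` relative to `(X, Y)` in `G`. -/
def BAdjCrit (G : PDAG V) (X Y Z : Set V) : Prop :=
  G.BAmenable X Y ∧ Z ∩ G.BForb X Y = ∅ ∧ G.BBlocking X Y Z

/-- In a DAG: `Z` blocks every proper non-causal path from `X` to `Y`. -/
def DagBlocking (D : PDAG V) (X Y Z : Set V) : Prop :=
  ∀ p, D.ProperPathFromTo X Y p → D.NonCausal p → D.Blocked p Z

/-- The canonical adjustment set `b-Adjust(X, Y, G)`. -/
def BAdjust (G : PDAG V) (X Y : Set V) : Set V :=
  G.BPossAn (X ∪ Y) \ (X ∪ Y ∪ G.BForb X Y)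

/-- `C` is a CPDAG: a maximal PDAG representing a Markov equivalence class of DAGs
in which every undirected edge is realized in both orientations by represented DAGs. -/
def IsCPDAG (C : PDAG V) : Prop :=
  C.ClosedMeek ∧ (∃ D : PDAG V, D.IsDAG ∧ RepresentedBy D C) ∧
  ∀ x y, C.undirE x y →
    (∃ D : PDAG V, D.IsDAG ∧ RepresentedBy D C ∧ D.dir x y) ∧
    (∃ D : PDAG V, D.IsDAG ∧ RepresentedBy D C ∧ D.dir y x)

end PDAG

/-!
At a node `b` entered by a directed edge `a → b`, the path cannot turn back (`b → a` would close a
cycle) and cannot be a collider (`c → b` is an edge against the order of a b-possibly causal path);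
since `a → b` is directed, `b` is not an undirected definite non-collider either. So definite status
forces `b → c`, and the directed edge propagates to the end of the path.
-/

namespace PDAG

variable {V : Type} {G : PDAG V}

lemma not_dir_of_dir {a b : V} (hab : G.dir a b) : ¬ G.dir b a := fun hba =>
  G.acyclic a (.tail (.single hab) hba)

lemma not_undirE_of_dir {a b : V} (hab : G.dir a b) : ¬ G.undirE a b := by
  rintro (h | h)
  · exact G.dir_not_undir a b hab h
  · exact G.dir_not_undir a b hab (G.undir_symm h)

lemma dir_of_dir_of_not_collider {a b c : V} (hab : G.dir a b) (hcb : ¬ G.dir c b)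
    (hs : G.ColliderAt (a, b, c) ∨ G.DefNonColliderAt (a, b, c)) : G.dir b c := by
  rcases hs with hcol | hba | hbc | hund
  · exact absurd hcol.2 hcb
  · exact absurd hba (not_dir_of_dir hab)
  · exact hbc
  · exact absurd hund.1 (not_undirE_of_dir hab)

lemma consPairs_cons_cons (x y : V) (l : List V) :
    consPairs (x :: y :: l) = (x, y) :: consPairs (y :: l) := rfl

lemma consPairs_subset_cons (x : V) (l : List V) : consPairs l ⊆ consPairs (x :: l) := by
  cases l with
  | nil => exact List.nil_subset _
  | cons y l => exact List.subset_cons_self _ _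

lemma triples_subset_cons (x : V) (l : List V) : triples l ⊆ triples (x :: l) := by
  match l with
  | [] | [_] => exact List.nil_subset _
  | _ :: _ :: _ => exact List.subset_cons_self _ _

lemma consPairs_subset_of_isSuffix {l₁ l₂ : List V} (h : l₁ <:+ l₂) :
    consPairs l₁ ⊆ consPairs l₂ := by
  obtain ⟨q, rfl⟩ := h
  induction q with
  | nil => exact List.Subset.refl _
  | cons x q ih => exact List.Subset.trans ih (consPairs_subset_cons x _)

lemma triples_subset_of_isSuffix {l₁ l₂ : List V} (h : l₁ <:+ l₂) :
    triples l₁ ⊆ triples l₂ := by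
  obtain ⟨q, rfl⟩ := h
  induction q with
  | nil => exact List.Subset.refl _
  | cons x q ih => exact List.Subset.trans ih (triples_subset_cons x _)

lemma DefiniteStatus.of_isSuffix {l₁ l₂ : List V} (h : G.DefiniteStatus l₂) (hs : l₁ <:+ l₂) :
    G.DefiniteStatus l₁ :=
  fun t ht => h t (triples_subset_of_isSuffix hs ht)

lemma exists_getElem_of_mem_consPairs {p : List V} {e : V × V} (h : e ∈ consPairs p) :
    ∃ (i : ℕ) (hi : i + 1 < p.length), e = (p[i], p[i + 1]) := by
  obtain ⟨i, hi, rfl⟩ := List.mem_iff_getElem.mp h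
  simp only [consPairs, List.length_zip, List.length_tail, lt_min_iff] at hi
  exact ⟨i, by omega, by simp [consPairs]⟩

lemma BPossCausal.not_dir_of_mem_consPairs {p : List V} (hp : G.BPossCausal p) {e : V × V}
    (he : e ∈ consPairs p) : ¬ G.dir e.2 e.1 := by
  obtain ⟨i, hi, rfl⟩ := exists_getElem_of_mem_consPairs he
  exact hp.2 ⟨i, by omega⟩ ⟨i + 1, hi⟩ (Nat.lt_succ_self i)

lemma dir_of_mem_consPairs_of_dir_head {a b : V} {r : List V}
    (hds : G.DefiniteStatus (a :: b :: r))
    (hback : ∀ e ∈ consPairs (a :: b :: r), ¬ G.dir e.2 e.1) (hab : G.dir a b) :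
    ∀ e ∈ consPairs (a :: b :: r), G.dir e.1 e.2 := by
  induction r generalizing a b with
  | nil =>
    intro e he
    obtain rfl : e = (a, b) := by simpa [consPairs] using he
    exact hab
  | cons c r ih =>
    have hbc : G.dir b c := dir_of_dir_of_not_collider hab
      (hback (b, c) (by simp [consPairs]))
      (hds _ (by simp [triples]))
    intro e he
    rw [consPairs_cons_cons, List.mem_cons] at he
    rcases he with rfl | he
    · exact hab
    · exact ih (hds.of_isSuffix (List.suffix_cons _ _))
        (fun e he => hback e (List.mem_cons_of_mem _ he)) hbc e he

end PDAG

theorem stmt3_general {V : Type} (G : PDAG V) (p : List V)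
    (hpc : G.BPossCausal p) (hds : G.DefiniteStatus p)
    (q : List V) (a b : V) (r : List V) (hsplit : p = q ++ a :: b :: r)
    (hdir : G.dir a b) :
    G.IsCausal (a :: b :: r) := by
  have hsuf : (a :: b :: r) <:+ p := ⟨q, hsplit.symm⟩
  refine ⟨by simp, hsuf.sublist.nodup hpc.1.2.1, ?_⟩
  exact PDAG.dir_of_mem_consPairs_of_dir_head (hds.of_isSuffix hsuf)
    (fun e he => hpc.not_dir_of_mem_consPairs (PDAG.consPairs_subset_of_isSuffix hsuf he)) hdir

/-- if a b-possibly causal definite status path contains a directed edge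
`V_i → V_{i+1}`, then the subpath from `V_i` to the end is a causal path. -/
theorem stmt3 {V : Type} (G : PDAG V) (hG : G.ClosedMeek) (p : List V)
    (hpc : G.BPossCausal p) (hds : G.DefiniteStatus p)
    (q : List V) (a b : V) (r : List V) (hsplit : p = q ++ a :: b :: r)
    (hdir : G.dir a b) :
    G.IsCausal (a :: b :: r) :=
  stmt3_general G p hpc hds q a b r hsplit hdir
end

section
/- Let X, Y be disjoint node sets in a maximal PDAG G that is b-amenable relative to (X, Y), and let Z be a node set disjoint from X ∪ Y with Z ∩ b-Forb(X,Y,G) = ∅. Then: if every proper b-non-causal definite status path from X to Y in G is blocked by Z, then for every DAG D represented by G, every proper non-causal path from X to Y in D is blocked by Z. -/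
/-!
Suppose `Z` does not block some proper non-causal path from `X` to `Y` in a DAG `D` represented
by `G`, and take such a path `p` that is shortest and, among the shortest, has its nodes closest
to `Z` in total. Minimality makes `p` a d-connecting definite status path in `G`. A collider with
adjacent neighbours could be cut out of `p`, and so could a shielded non-collider unless one of
its edges is directed in `G` (the remaining configuration is excluded by Meek's rules and
b-amenability). If a collider reaches `Z` only through an edge that is undirected in `G`, Meek's
rule R1 makes the head of that edge a common child of the collider's neighbours, and rerouting
`p` through it gives a smaller witness. Finally `p` is b-non-causal in `G`: otherwise the first
edge of `p` pointing backwards in `D` either leaves `X`, against b-amenability, or meets a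
collider whose descendant in `Z` is b-forbidden.
-/
namespace PDAG

variable {V : Type}

section Lists

variable {a b c : V} {l l₁ l₂ : List V}

@[simp] lemma consPairs_nil : consPairs ([] : List V) = [] := rfl

@[simp] lemma consPairs_singleton : consPairs [a] = [] := rfl

@[simp] lemma consPairs_cons_cons_s5 : consPairs (a :: b :: l) = (a, b) :: consPairs (b :: l) := rfl

lemma forall_mem_consPairs_iff_isChain {R : V → V → Prop} :
    (∀ e ∈ consPairs l, R e.1 e.2) ↔ l.IsChain R := by
  induction l using List.twoStepInduction with
  | nil | singleton => simp
  | cons_cons a b l _ ih => simp_all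

lemma consPairs_append_cons :
    consPairs (l₁ ++ a :: l₂) = consPairs (l₁ ++ [a]) ++ consPairs (a :: l₂) := by
  induction l₁ with
  | nil => rfl
  | cons x l ih => cases l <;> simp_all

@[simp] lemma triples_nil : triples ([] : List V) = [] := rfl

@[simp] lemma triples_singleton : triples [a] = [] := rfl

@[simp] lemma triples_pair : triples [a, b] = [] := rfl

@[simp] lemma triples_cons_cons_cons :
    triples (a :: b :: c :: l) = (a, b, c) :: triples (b :: c :: l) := rfl

lemma triples_append_cons_cons :
    triples (l₁ ++ a :: b :: l₂) = triples (l₁ ++ [a, b]) ++ triples (a :: b :: l₂) := by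
  induction l₁ with
  | nil => rfl
  | cons x l ih =>
    rcases l with _ | ⟨y, _ | ⟨z, l⟩⟩ <;> simp_all

lemma forall_triples_append_cons_cons {P : V × V × V → Prop} :
    (∀ t ∈ triples (l₁ ++ a :: b :: l₂), P t) ↔
      (∀ t ∈ triples (l₁ ++ [a, b]), P t) ∧ ∀ t ∈ triples (a :: b :: l₂), P t := by
  rw [triples_append_cons_cons, List.forall_mem_append]

lemma forall_triples_concat_of_imp {P : V × V × V → Prop}
    (h : ∀ t ∈ triples (l ++ [a, b]), P t)
    (hb : ∀ x, (x, a, b) ∈ triples (l ++ [a, b]) → P (x, a, b) → P (x, a, c)) :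
    ∀ t ∈ triples (l ++ [a, c]), P t := by
  rcases l.eq_nil_or_concat' with rfl | ⟨l, x, rfl⟩
  · simp
  · have e : ∀ d, l ++ [x] ++ [a, d] = l ++ x :: a :: [d] := by simp
    rw [e, forall_triples_append_cons_cons] at h ⊢
    rw [e, triples_append_cons_cons] at hb
    simp_all

lemma forall_triples_cons_of_imp {P : V × V × V → Prop}
    (h : ∀ t ∈ triples (a :: b :: l), P t)
    (ha : ∀ y, (a, b, y) ∈ triples (a :: b :: l) → P (a, b, y) → P (c, b, y)) :
    ∀ t ∈ triples (c :: b :: l), P t := by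
  rcases l with _ | ⟨y, l⟩
  · simp
  · simp_all

lemma mem_triples_iff {t : V × V × V} :
    t ∈ triples l ↔ ∃ l₁ l₂, l = l₁ ++ t.1 :: t.2.1 :: t.2.2 :: l₂ := by
  constructor
  · induction l with
    | nil => simp
    | cons x l ih =>
      rcases l with _ | ⟨y, _ | ⟨z, l⟩⟩
      · simp
      · simp
      · simp only [triples_cons_cons_cons, List.mem_cons]
        rintro (rfl | h)
        · exact ⟨[], l, rfl⟩
        · obtain ⟨l₁, l₂, h⟩ := ih h
          exact ⟨x :: l₁, l₂, by rw [h]; rfl⟩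
  · rintro ⟨l₁, l₂, rfl⟩
    rw [triples_append_cons_cons]
    simp

lemma triples_subset_of_infix (h : l₁ <:+: l₂) : triples l₁ ⊆ triples l₂ := by
  intro t ht
  obtain ⟨s, e, rfl⟩ := h
  obtain ⟨m₁, m₂, rfl⟩ := mem_triples_iff.mp ht
  exact mem_triples_iff.mpr ⟨s ++ m₁, m₂ ++ e, by simp⟩

lemma mem_consPairs_iff {e : V × V} :
    e ∈ consPairs l ↔ ∃ l₁ l₂, l = l₁ ++ e.1 :: e.2 :: l₂ := by
  constructor
  · induction l with
    | nil => simp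
    | cons x l ih =>
      rcases l with _ | ⟨y, l⟩
      · simp
      · simp only [consPairs_cons_cons_s5, List.mem_cons]
        rintro (rfl | h)
        · exact ⟨[], l, rfl⟩
        · obtain ⟨l₁, l₂, h⟩ := ih h
          exact ⟨x :: l₁, l₂, by rw [h]; rfl⟩
  · rintro ⟨l₁, l₂, rfl⟩
    rw [consPairs_append_cons]
    simp

lemma rel_of_mem_triples {R : V → V → Prop} {t : V × V × V} (hl : l.IsChain R)
    (ht : t ∈ triples l) : R t.1 t.2.1 ∧ R t.2.1 t.2.2 := by
  obtain ⟨l₁, l₂, rfl⟩ := mem_triples_iff.mp ht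
  simp only [List.isChain_append_cons_cons, List.isChain_cons_cons] at hl
  exact ⟨hl.2.1, hl.2.2.1⟩

lemma mem_tail_of_mem_triples {t : V × V × V} (ht : t ∈ triples l) : t.2.1 ∈ l.tail := by
  obtain ⟨l₁, l₂, rfl⟩ := mem_triples_iff.mp ht
  cases l₁ <;> simp

end Lists

section Graphs

variable {G D : PDAG V} {a b c x y z : V}

lemma dir_asymm (h : G.dir x y) : ¬ G.dir y x := fun h' =>
  G.acyclic x ((Relation.TransGen.single h).tail h')

lemma dir_ne (h : G.dir x y) : x ≠ y := by
  rintro rfl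
  exact dir_asymm h h

lemma not_dir_of_dir_of_dir (hxy : G.dir x y) (hyz : G.dir y z) : ¬ G.dir z x := fun hzx =>
  G.acyclic x (((Relation.TransGen.single hxy).tail hyz).tail hzx)

lemma not_undirE_of_dir_s5 (h : G.dir x y) : ¬ G.undirE x y := by
  rintro (h' | h')
  exacts [G.dir_not_undir x y h h', G.dir_not_undir x y h (G.undir_symm h')]

lemma adj_of_dir (h : G.dir x y) : G.adj x y := Or.inl h

lemma adj_comm : G.adj x y ↔ G.adj y x := by
  unfold adj undirE
  tauto

lemma desc_of_dir_of_desc (hxy : G.dir x y) (hyz : G.Desc y z) : G.Desc x z := by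
  rcases hyz with rfl | hyz
  exacts [Or.inr (.single hxy), Or.inr (.head hxy hyz)]

lemma IsDAG.dir_or_dir (hD : D.IsDAG) (h : D.adj x y) : D.dir x y ∨ D.dir y x := by
  rcases h with h | h | h | h
  exacts [Or.inl h, Or.inr h, (hD x y h).elim, (hD y x h).elim]

lemma RepresentedBy.adj_iff (hrep : RepresentedBy D G) : D.adj x y ↔ G.adj x y := hrep.1 x y

lemma RepresentedBy.dir (hrep : RepresentedBy D G) (h : G.dir x y) : D.dir x y := hrep.2.2 x y h

lemma RepresentedBy.dir_or_undirE (hrep : RepresentedBy D G) (h : D.dir x y) :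
    G.dir x y ∨ G.undirE x y := by
  rcases hrep.adj_iff.mp (adj_of_dir h) with h' | h' | h'
  exacts [Or.inl h', (dir_asymm h (hrep.dir h')).elim, Or.inr h']

lemma RepresentedBy.colliderAt (hrep : RepresentedBy D G) (hcol : D.ColliderAt (a, b, c))
    (hac : ¬ D.adj a c) : G.ColliderAt (a, b, c) := by
  obtain ⟨h₁, h₂, -⟩ := (hrep.2.1 a b c).mp ⟨hcol.1, hcol.2, hac⟩
  exact ⟨h₁, h₂⟩

lemma ClosedMeek.adj_of_dir_of_undirE (hG : G.ClosedMeek) (hab : G.dir a b)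
    (hbc : G.undirE b c) : G.adj a c := by
  by_contra hac
  exact not_undirE_of_dir_s5 (hG.1 a b c hab hbc hac) hbc

lemma ClosedMeek.defNonColliderAt (hG : G.ClosedMeek) (hab : G.adj a b) (hbc : G.adj b c)
    (hac : ¬ G.adj a c) (hcol : ¬ G.ColliderAt (a, b, c)) : G.DefNonColliderAt (a, b, c) := by
  rcases hab with hab | hba | hab <;> rcases hbc with hbc | hcb | hbc
  · exact Or.inr (Or.inl hbc)
  · exact (hcol ⟨hab, hcb⟩).elim
  · exact (not_undirE_of_dir_s5 (hG.1 a b c hab hbc hac) hbc).elim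
  all_goals try exact Or.inl hba
  · exact Or.inr (Or.inl hbc)
  · exact (not_undirE_of_dir_s5 (hG.1 c b a hcb hab.symm (mt adj_comm.mp hac)) hab.symm).elim
  · exact Or.inr (Or.inr ⟨hab, hbc, hac⟩)

lemma RepresentedBy.dir_of_dir_of_undirE (hrep : RepresentedBy D G) (hG : G.ClosedMeek)
    (hD : D.IsDAG) (hab : G.dir a b) (hbc : G.undirE b c) (hbc' : D.dir b c) : D.dir a c :=
  (hD.dir_or_dir (hrep.adj_iff.mpr (hG.adj_of_dir_of_undirE hab hbc))).resolve_right
    (not_dir_of_dir_of_dir (hrep.dir hab) hbc')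

end Graphs

section Paths

variable {G D : PDAG V} {X Y : Set V} {p : List V} {a b c u v z : V}

lemma isPath_iff : G.IsPath p ↔ 2 ≤ p.length ∧ p.Nodup ∧ p.IsChain G.adj := by
  rw [IsPath, forall_mem_consPairs_iff_isChain]

lemma RepresentedBy.isPath_iff (hrep : RepresentedBy D G) : D.IsPath p ↔ G.IsPath p := by
  simp only [PDAG.isPath_iff, show D.adj = G.adj from funext₂ fun _ _ => propext hrep.adj_iff]

lemma bPossCausal_iff :
    G.BPossCausal p ↔ G.IsPath p ∧ p.Pairwise (fun x y => ¬ G.dir y x) := by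
  rw [BPossCausal, List.pairwise_iff_get]
  rfl

lemma bNonCausal_iff_not_bPossCausal (hp : G.IsPath p) : G.BNonCausal p ↔ ¬ G.BPossCausal p := by
  simp [BNonCausal, BPossCausal, hp]

lemma pairwise_transGen_of_isChain (hp : p.IsChain G.dir) :
    p.Pairwise (Relation.TransGen G.dir) :=
  List.isChain_iff_pairwise.mp (hp.imp fun _ _ => Relation.TransGen.single)

lemma nodup_of_isChain (hp : p.IsChain G.dir) : p.Nodup :=
  (pairwise_transGen_of_isChain hp).imp fun {x y} (h : Relation.TransGen G.dir x y) (he : x = y) =>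
    G.acyclic y (he ▸ h)

lemma pairwise_not_dir_of_isChain (hrep : RepresentedBy D G) (hp : p.IsChain D.dir) :
    p.Pairwise (fun x y => ¬ G.dir y x) :=
  (pairwise_transGen_of_isChain hp).imp fun {x y} h (hyx : G.dir y x) =>
    D.acyclic x (h.tail (hrep.dir hyx))

lemma bPossCausal_of_isChain (hrep : RepresentedBy D G) (hlen : 2 ≤ p.length)
    (hp : p.IsChain D.dir) : G.BPossCausal p := by
  refine bPossCausal_iff.mpr ⟨hrep.isPath_iff.mp ?_, pairwise_not_dir_of_isChain hrep hp⟩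
  exact isPath_iff.mpr ⟨hlen, nodup_of_isChain hp, hp.imp fun _ _ => adj_of_dir⟩

lemma bPossDescNode_of_desc (hrep : RepresentedBy D G) (h : D.Desc v z) : G.BPossDescNode v z := by
  rcases h with rfl | h
  · exact Or.inl rfl
  obtain ⟨w, hvw, hwz⟩ := Relation.TransGen.head'_iff.mp h
  obtain ⟨l, hl, hlast⟩ := List.exists_isChain_cons_of_relationReflTransGen hwz
  refine Or.inr ⟨v :: w :: l, bPossCausal_of_isChain hrep (by simp) (hl.cons_cons hvw), rfl, ?_⟩
  rw [List.getLast?_eq_some_getLast (by simp), List.getLast_cons (by simp), hlast]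

lemma mem_bForb (hrep : RepresentedBy D G) (hp : G.ProperPathFromTo X Y p)
    (hbp : G.BPossCausal p) (hv : v ∈ p.tail) (hd : D.Desc v z) : z ∈ G.BForb X Y :=
  ⟨v, p, hp.2.2.2 v hv, hp, hbp, List.mem_of_mem_tail hv, bPossDescNode_of_desc hrep hd⟩

lemma RepresentedBy.properPathFromTo_iff (hrep : RepresentedBy D G) :
    D.ProperPathFromTo X Y p ↔ G.ProperPathFromTo X Y p := by
  rw [ProperPathFromTo, ProperPathFromTo, hrep.isPath_iff]

lemma not_nonCausal_of_isChain (hp : p.IsChain G.dir) : ¬ G.NonCausal p := fun ⟨_, e, he, h⟩ =>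
  dir_asymm (forall_mem_consPairs_iff_isChain.mpr hp e he) h

lemma IsDAG.nonCausal_or_isChain (hD : D.IsDAG) (hp : D.IsPath p) :
    D.NonCausal p ∨ p.IsChain D.dir := by
  by_cases h : ∃ e ∈ consPairs p, D.dir e.2 e.1
  · exact Or.inl ⟨hp, h⟩
  push Not at h
  have hadj := (isPath_iff.mp hp).2.2
  rw [← forall_mem_consPairs_iff_isChain] at hadj ⊢
  exact Or.inr fun e he => (hD.dir_or_dir (hadj e he)).resolve_right (h e he)

lemma IsDAG.exists_colliderAt_of_nonCausal (hD : D.IsDAG) (hp : D.NonCausal p) :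
    (∃ x y l, p = x :: y :: l ∧ D.dir y x) ∨ ∃ t ∈ triples p, D.ColliderAt t := by
  obtain ⟨hpath, hback⟩ := hp
  replace hpath := (isPath_iff.mp hpath).2.2
  induction p with
  | nil => simp at hback
  | cons x l ih =>
    rcases l with _ | ⟨y, l⟩
    · simp at hback
    rw [List.isChain_cons_cons] at hpath
    by_cases hyx : D.dir y x
    · exact Or.inl ⟨x, y, l, rfl, hyx⟩
    have hxy := (hD.dir_or_dir hpath.1).resolve_right hyx
    simp only [consPairs_cons_cons_s5, List.mem_cons, exists_eq_or_imp, hyx, false_or] at hback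
    right
    rcases ih hback hpath.2 with ⟨_, w, l', h, hwy⟩ | ⟨t, ht, hcol⟩
    · obtain ⟨rfl, rfl⟩ := List.cons_eq_cons.mp h
      exact ⟨(x, y, w), by simp, hxy, hwy⟩
    · rcases l with _ | ⟨w, l⟩
      · simp at ht
      · exact ⟨t, by simp [ht], hcol⟩

end Paths


section OpenTriples

variable {G D : PDAG V} {Z : Set V} {a b c x y z z' : V}

def OpenTriple (G : PDAG V) (Z : Set V) (t : V × V × V) : Prop :=
  (G.ColliderAt t → ∃ w ∈ Z, G.Desc t.2.1 w) ∧ (¬ G.ColliderAt t → t.2.1 ∉ Z)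

lemma dConn_iff {p : List V} : G.DConn p Z ↔ ∀ t ∈ triples p, G.OpenTriple Z t := Iff.rfl

lemma openTriple_comm : G.OpenTriple Z (x, y, z) ↔ G.OpenTriple Z (z, y, x) := by
  simp only [OpenTriple, ColliderAt, and_comm]

lemma openTriple_of_dir (hyz : G.dir y z) (hy : y ∉ Z) : G.OpenTriple Z (x, y, z) :=
  ⟨fun h => (dir_asymm hyz h.2).elim, fun _ => hy⟩

lemma openTriple_of_colliderAt (h : G.ColliderAt (x, y, z)) (hy : ∃ w ∈ Z, G.Desc y w) :
    G.OpenTriple Z (x, y, z) :=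
  ⟨fun _ => hy, fun h' => (h' h).elim⟩

lemma OpenTriple.of_dir_of_dir (h : G.OpenTriple Z (x, y, z)) (hyz : G.dir y z)
    (hyz' : G.dir y z') : G.OpenTriple Z (x, y, z') :=
  openTriple_of_dir hyz' (h.2 fun hc => dir_asymm hyz hc.2)

lemma OpenTriple.of_dir_of_desc (h : G.OpenTriple Z (x, y, z)) (hz'y : G.dir z' y)
    (hy : ∃ w ∈ Z, G.Desc y w) : G.OpenTriple Z (x, y, z') := by
  by_cases hxy : G.dir x y
  · exact openTriple_of_colliderAt ⟨hxy, hz'y⟩ hy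
  · exact ⟨fun hc => (hxy hc.1).elim, fun _ => h.2 fun hc => hxy hc.1⟩

lemma OpenTriple.of_erase (hD : D.IsDAG) (h : D.OpenTriple Z (x, a, c))
    (hc : D.OpenTriple Z (a, c, b)) (hac : D.adj a c) (hcb : D.adj c b) (hab : D.adj a b)
    (hleft : D.ColliderAt (x, a, c) → D.dir a b → a ∉ Z) : D.OpenTriple Z (x, a, b) := by
  by_cases hcol : D.ColliderAt (x, a, b)
  · refine openTriple_of_colliderAt hcol ?_
    by_cases hca : D.dir c a
    · exact h.1 ⟨hcol.1, hca⟩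
    have hac' := (hD.dir_or_dir hac).resolve_right hca
    rcases hD.dir_or_dir hcb with hcb' | hbc
    · exact (not_dir_of_dir_of_dir hac' hcb' hcol.2).elim
    · obtain ⟨w, hw, hcw⟩ := hc.1 ⟨hac', hbc⟩
      exact ⟨w, hw, desc_of_dir_of_desc hac' hcw⟩
  · refine ⟨fun h' => (hcol h').elim, fun _ => ?_⟩
    by_cases hcol' : D.ColliderAt (x, a, c)
    · exact hleft hcol' ((hD.dir_or_dir hab).resolve_right fun hba => hcol ⟨hcol'.1, hba⟩)
    · exact h.2 hcol'

end OpenTriples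

section Depth

variable {G D : PDAG V} {Z : Set V} {c u w : V} {n : ℕ}

def ReachesIn (D : PDAG V) (Z : Set V) : ℕ → V → Prop
  | 0, c => c ∈ Z
  | n + 1, c => ∃ u, D.dir c u ∧ ReachesIn D Z n u

lemma exists_desc_of_reachesIn :
    ∀ {n : ℕ} {c : V}, ReachesIn D Z n c → ∃ w ∈ Z, D.Desc c w
  | 0, c, h => ⟨c, h, Or.inl rfl⟩
  | _ + 1, _, ⟨_, hcu, h⟩ =>
    let ⟨w, hw, huw⟩ := exists_desc_of_reachesIn h
    ⟨w, hw, desc_of_dir_of_desc hcu huw⟩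

lemma exists_reachesIn_of_desc (h : D.Desc c w) (hw : w ∈ Z) : ∃ n, ReachesIn D Z n c := by
  rcases h with rfl | h
  · exact ⟨0, hw⟩
  induction h using Relation.TransGen.head_induction_on with
  | single h => exact ⟨1, w, h, hw⟩
  | head h _ ih =>
    obtain ⟨n, hn⟩ := ih
    exact ⟨n + 1, _, h, hn⟩

noncomputable def depth (D : PDAG V) (Z : Set V) (c : V) : ℕ := sInf {n | ReachesIn D Z n c}

lemma depth_le (h : ReachesIn D Z n c) : depth D Z c ≤ n := Nat.sInf_le h

lemma reachesIn_depth (h : ∃ n, ReachesIn D Z n c) : ReachesIn D Z (depth D Z c) c :=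
  Nat.sInf_mem h

/-- By Meek's rule R1, a directed path from `c` into `Z` in `D` can be shortened until either it
is directed in `G` or its first edge is undirected in `G`. -/
lemma exists_undirE_of_reachesIn (hG : G.ClosedMeek) (hD : D.IsDAG) (hrep : RepresentedBy D G)
    (h : ReachesIn D Z n c) :
    (∃ w ∈ Z, G.Desc c w) ∨
      ∃ u m, G.undirE c u ∧ D.dir c u ∧ m < n ∧ ReachesIn D Z m u := by
  induction n using Nat.strong_induction_on generalizing c with
  | _ n ih =>
  match n, h with
  | 0, h => exact Or.inl ⟨c, h, Or.inl rfl⟩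
  | k + 1, ⟨v, hcv, hv⟩ =>
    rcases hrep.dir_or_undirE hcv with hcv' | hcv'
    · rcases ih k (by omega) hv with ⟨w, hw, hvw⟩ | ⟨u, m, hvu, hvu', hm, hu⟩
      · exact Or.inl ⟨w, hw, desc_of_dir_of_desc hcv' hvw⟩
      rcases ih (m + 1) (by omega) ⟨u, hrep.dir_of_dir_of_undirE hG hD hcv' hvu hvu', hu⟩
        with h' | ⟨u', m', h₁, h₂, h₃, h₄⟩
      · exact Or.inl h'
      · exact Or.inr ⟨u', m', h₁, h₂, by omega, h₄⟩
    · exact Or.inr ⟨v, k, hcv', hcv, by omega, hv⟩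

end Depth

section Surgery

variable {G : PDAG V} {X Y : Set V} {L K R : List V} {a b c u : V}

lemma ProperPathFromTo.of_isPath {p q : List V} (hp : G.ProperPathFromTo X Y p)
    (hq : G.IsPath q) (hhead : q.head? = p.head?) (hlast : q.getLast? = p.getLast?)
    (htail : ∀ v ∈ q.tail, v ∈ p.tail ∨ v ∉ X) : G.ProperPathFromTo X Y q :=
  ⟨hq, hhead ▸ hp.2.1, hlast ▸ hp.2.2.1, fun v hv => (htail v hv).elim (hp.2.2.2 v) id⟩

lemma ProperPathFromTo.shortcut (hp : G.ProperPathFromTo X Y (L ++ a :: (K ++ b :: R)))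
    (hab : G.adj a b) : G.ProperPathFromTo X Y (L ++ a :: b :: R) := by
  obtain ⟨-, hnd, hchain⟩ := isPath_iff.mp hp.1
  have hsub : (L ++ a :: b :: R).Sublist (L ++ a :: (K ++ b :: R)) :=
    ((List.sublist_append_right K _).cons_cons a).append_left L
  refine hp.of_isPath (isPath_iff.mpr ⟨by simp; omega, hnd.sublist hsub, ?_⟩) (by simp) ?_ ?_
  · obtain ⟨h₁, h₂⟩ := List.isChain_split.mp hchain
    rw [← List.cons_append, List.isChain_split] at h₂
    rw [List.isChain_split, List.isChain_cons_cons]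
    exact ⟨h₁, hab, h₂.2⟩
  · rw [List.getLast?_append_cons, List.getLast?_append_cons, List.getLast?_cons_cons,
      ← List.cons_append, List.getLast?_append_cons]
  · rcases L with _ | ⟨x, L⟩ <;> simp <;> tauto

lemma ProperPathFromTo.replace (hp : G.ProperPathFromTo X Y (L ++ a :: c :: b :: R))
    (hu : u ∉ L ++ a :: c :: b :: R) (huX : u ∉ X) (hau : G.adj a u) (hub : G.adj u b) :
    G.ProperPathFromTo X Y (L ++ a :: u :: b :: R) := by
  obtain ⟨-, hnd, hchain⟩ := isPath_iff.mp hp.1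
  have hnd' : (L ++ a :: u :: b :: R).Nodup := by
    have hsub : (L ++ [a] ++ b :: R).Sublist (L ++ a :: c :: b :: R) := by
      simp [((List.sublist_cons_self c _).cons_cons a).append_left L]
    rw [show L ++ a :: u :: b :: R = L ++ [a] ++ u :: b :: R by simp, List.nodup_middle,
      List.nodup_cons]
    exact ⟨fun h => hu (hsub.subset h), hnd.sublist hsub⟩
  refine hp.of_isPath (isPath_iff.mpr ⟨by simp; omega, hnd', ?_⟩) (by simp) (by simp) ?_
  · simp only [List.isChain_append_cons_cons, List.isChain_cons_cons] at hchain ⊢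
    exact ⟨hchain.1, hau, hub, hchain.2.2.2⟩
  · intro v hv
    by_cases hvu : v = u
    · exact Or.inr (hvu ▸ huX)
    · left
      rcases L with _ | ⟨x, L⟩ <;> simp at hv ⊢ <;> tauto

lemma ProperPathFromTo.restart (hp : G.ProperPathFromTo X Y (L ++ a :: b :: R))
    (hu : u ∉ b :: R) (huX : u ∈ X) (hub : G.adj u b) :
    G.ProperPathFromTo X Y (u :: b :: R) := by
  obtain ⟨-, hnd, hchain⟩ := isPath_iff.mp hp.1
  have hsub : (b :: R).Sublist (L ++ a :: b :: R) :=
    (List.sublist_cons_self a _).trans (List.sublist_append_right L _)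
  refine ⟨isPath_iff.mpr ⟨by simp, List.nodup_cons.mpr ⟨hu, hnd.sublist hsub⟩, ?_⟩,
    ⟨u, huX, rfl⟩, ?_, fun v hv => hp.2.2.2 v ?_⟩
  · simp only [List.isChain_append_cons_cons, List.isChain_cons_cons] at hchain ⊢
    exact ⟨hub, hchain.2.2⟩
  · have := hp.2.2.1
    rwa [List.getLast?_append_cons, List.getLast?_cons_cons] at this
  · rcases L with _ | ⟨x, L⟩ <;> simp_all

end Surgery


section Witness

variable {D : PDAG V} {X Y Z : Set V} {L K R : List V} {a b c u : V}

def OpenNonCausal (D : PDAG V) (X Y Z : Set V) (p : List V) : Prop :=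
  D.ProperPathFromTo X Y p ∧ D.NonCausal p ∧ D.DConn p Z

lemma OpenNonCausal.erase (hD : D.IsDAG) (hp : D.OpenNonCausal X Y Z (L ++ a :: c :: b :: R))
    (hab : D.adj a b)
    (hleft : ∀ x, (x, a, c) ∈ triples (L ++ a :: c :: b :: R) → D.ColliderAt (x, a, c) →
      D.dir a b → a ∉ Z)
    (hright : ∀ y, (c, b, y) ∈ triples (L ++ a :: c :: b :: R) → D.ColliderAt (c, b, y) →
      D.dir b a → b ∉ Z)
    (hq : ¬ (L ++ a :: b :: R).IsChain D.dir) :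
    D.OpenNonCausal X Y Z (L ++ a :: b :: R) := by
  obtain ⟨hpp, -, hconn⟩ := hp
  have hq' : D.ProperPathFromTo X Y (L ++ a :: b :: R) := hpp.shortcut (K := [c]) hab
  have hchain := (isPath_iff.mp hpp.1).2.2
  simp only [List.isChain_append_cons_cons, List.isChain_cons_cons] at hchain
  refine ⟨hq', (hD.nonCausal_or_isChain hq'.1).resolve_right hq, ?_⟩
  have hsubL : triples (L ++ [a, c]) ⊆ triples (L ++ a :: c :: b :: R) :=
    triples_subset_of_infix ⟨[], b :: R, by simp⟩
  have hsubR : triples (c :: b :: R) ⊆ triples (L ++ a :: c :: b :: R) :=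
    triples_subset_of_infix ⟨L ++ [a], [], by simp⟩
  rw [dConn_iff] at hconn ⊢
  have hacb : D.OpenTriple Z (a, c, b) := hconn _ (mem_triples_iff.mpr ⟨L, R, rfl⟩)
  rw [forall_triples_append_cons_cons]
  constructor
  · refine forall_triples_concat_of_imp (fun t ht => hconn t (hsubL ht)) fun x hx h => ?_
    exact h.of_erase hD hacb hchain.2.1 hchain.2.2.1 hab (hleft x (hsubL hx))
  · refine forall_triples_cons_of_imp (fun t ht => hconn t (hsubR ht)) fun y hy h => ?_
    rw [openTriple_comm] at h ⊢
    exact h.of_erase hD (openTriple_comm.mp hacb) (adj_comm.mp hchain.2.2.1)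
      (adj_comm.mp hchain.2.1) (adj_comm.mp hab)
      fun hcol => hright y (hsubR hy) ⟨hcol.2, hcol.1⟩

lemma OpenNonCausal.bypass_left (hp : D.OpenNonCausal X Y Z (L ++ u :: (K ++ c :: b :: R)))
    (hbc : D.dir b c) (hbu : D.dir b u) (hu : ∃ w ∈ Z, D.Desc u w) :
    D.OpenNonCausal X Y Z (L ++ u :: b :: R) := by
  obtain ⟨hpp, -, hconn⟩ := hp
  have hq : D.ProperPathFromTo X Y (L ++ u :: b :: R) :=
    ProperPathFromTo.shortcut (K := K ++ [c]) (by simpa using hpp) (adj_comm.mp (adj_of_dir hbu))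
  refine ⟨hq, ⟨hq.1, (u, b), mem_consPairs_iff.mpr ⟨L, R, rfl⟩, hbu⟩, ?_⟩
  obtain ⟨k, l, hk⟩ := List.exists_cons_of_ne_nil (show K ++ c :: b :: R ≠ [] by simp)
  rw [dConn_iff, hk, forall_triples_append_cons_cons] at hconn
  rw [dConn_iff, forall_triples_append_cons_cons]
  constructor
  · exact forall_triples_concat_of_imp hconn.1 fun x _ h => h.of_dir_of_desc hbu hu
  · have hsub : triples (c :: b :: R) ⊆ triples (u :: k :: l) :=
      triples_subset_of_infix ⟨u :: K, [], by simp [← hk]⟩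
    refine forall_triples_cons_of_imp (fun t ht => hconn.2 t (hsub ht)) fun y _ h => ?_
    rw [openTriple_comm] at h ⊢
    exact h.of_dir_of_dir hbc hbu

lemma OpenNonCausal.bypass_right (hD : D.IsDAG)
    (hp : D.OpenNonCausal X Y Z (L ++ a :: c :: (K ++ u :: R)))
    (hac : D.dir a c) (hau : D.dir a u) (hu : ∃ w ∈ Z, D.Desc u w)
    (hq : ¬ (L ++ a :: u :: R).IsChain D.dir) :
    D.OpenNonCausal X Y Z (L ++ a :: u :: R) := by
  obtain ⟨hpp, -, hconn⟩ := hp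
  have hq' : D.ProperPathFromTo X Y (L ++ a :: u :: R) :=
    ProperPathFromTo.shortcut (K := c :: K) hpp (adj_of_dir hau)
  refine ⟨hq', (hD.nonCausal_or_isChain hq'.1).resolve_right hq, ?_⟩
  obtain ⟨K', k, hk⟩ := (List.eq_nil_or_concat' (c :: K)).resolve_left (by simp)
  have hsubL : triples (L ++ [a, c]) ⊆ triples (L ++ a :: c :: (K ++ u :: R)) :=
    triples_subset_of_infix ⟨[], K ++ u :: R, by simp⟩
  have hsubR : triples (k :: u :: R) ⊆ triples (L ++ a :: c :: (K ++ u :: R)) :=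
    triples_subset_of_infix ⟨L ++ a :: K', [], by
      rw [List.append_nil, show c :: (K ++ u :: R) = (c :: K) ++ u :: R from rfl, hk]; simp⟩
  rw [dConn_iff] at hconn
  rw [dConn_iff, forall_triples_append_cons_cons]
  constructor
  · refine forall_triples_concat_of_imp (fun t ht => hconn t (hsubL ht)) fun x _ h => ?_
    exact h.of_dir_of_dir hac hau
  · refine forall_triples_cons_of_imp (fun t ht => hconn t (hsubR ht)) fun y _ h => ?_
    rw [openTriple_comm] at h ⊢
    exact h.of_dir_of_desc hau hu

lemma OpenNonCausal.restart (hp : D.OpenNonCausal X Y Z (L ++ a :: c :: b :: R))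
    (hu : u ∉ b :: R) (huX : u ∈ X) (hbc : D.dir b c) (hbu : D.dir b u) :
    D.OpenNonCausal X Y Z (u :: b :: R) := by
  obtain ⟨hpp, -, hconn⟩ := hp
  have hq : D.ProperPathFromTo X Y (u :: b :: R) :=
    ProperPathFromTo.restart (L := L ++ [a]) (by simpa using hpp) hu huX
      (adj_comm.mp (adj_of_dir hbu))
  refine ⟨hq, ⟨hq.1, (u, b), by simp, hbu⟩, ?_⟩
  have hsub : triples (c :: b :: R) ⊆ triples (L ++ a :: c :: b :: R) :=
    triples_subset_of_infix ⟨L ++ [a], [], by simp⟩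
  rw [dConn_iff] at hconn ⊢
  refine forall_triples_cons_of_imp (fun t ht => hconn t (hsub ht)) fun y _ h => ?_
  rw [openTriple_comm] at h ⊢
  exact h.of_dir_of_dir hbc hbu

lemma OpenNonCausal.replace (hp : D.OpenNonCausal X Y Z (L ++ a :: c :: b :: R))
    (hu : u ∉ L ++ a :: c :: b :: R) (huX : u ∉ X) (hac : D.dir a c) (hbc : D.dir b c)
    (hau : D.dir a u) (hbu : D.dir b u) (hu' : ∃ w ∈ Z, D.Desc u w) :
    D.OpenNonCausal X Y Z (L ++ a :: u :: b :: R) := by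
  obtain ⟨hpp, -, hconn⟩ := hp
  have hq : D.ProperPathFromTo X Y (L ++ a :: u :: b :: R) :=
    hpp.replace hu huX (adj_of_dir hau) (adj_comm.mp (adj_of_dir hbu))
  refine ⟨hq, ⟨hq.1, (u, b), mem_consPairs_iff.mpr ⟨L ++ [a], R, by simp⟩, hbu⟩, ?_⟩
  have hsubL : triples (L ++ [a, c]) ⊆ triples (L ++ a :: c :: b :: R) :=
    triples_subset_of_infix ⟨[], b :: R, by simp⟩
  have hsubR : triples (c :: b :: R) ⊆ triples (L ++ a :: c :: b :: R) :=
    triples_subset_of_infix ⟨L ++ [a], [], by simp⟩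
  rw [dConn_iff] at hconn
  rw [dConn_iff, forall_triples_append_cons_cons, triples_cons_cons_cons, List.forall_mem_cons]
  refine ⟨?_, openTriple_of_colliderAt ⟨hau, hbu⟩ hu', ?_⟩
  · refine forall_triples_concat_of_imp (fun t ht => hconn t (hsubL ht)) fun x _ h => ?_
    exact h.of_dir_of_dir hac hau
  · refine forall_triples_cons_of_imp (fun t ht => hconn t (hsubR ht)) fun y _ h => ?_
    rw [openTriple_comm] at h ⊢
    exact h.of_dir_of_dir hbc hbu

end Witness


section Minimal

variable {G D : PDAG V} {X Y Z : Set V} {p l K L R : List V} {a b c u v w x y : V}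

-- Breaks ties in length: rerouting a collider through a child that is closer to `Z` lowers it.
noncomputable def weight (D : PDAG V) (Z : Set V) (p : List V) : ℕ := (p.map (depth D Z)).sum

structure IsMinimalOpenNonCausal (D : PDAG V) (X Y Z : Set V) (p : List V) : Prop where
  openNonCausal : D.OpenNonCausal X Y Z p
  length_le : ∀ q, D.OpenNonCausal X Y Z q → p.length ≤ q.length
  weight_le :
    ∀ q, D.OpenNonCausal X Y Z q → q.length = p.length → weight D Z p ≤ weight D Z q

lemma exists_isMinimalOpenNonCausal (h : D.OpenNonCausal X Y Z p) :
    ∃ q, D.IsMinimalOpenNonCausal X Y Z q := by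
  obtain ⟨q, hq, hmin⟩ := (InvImage.wf (fun q : List V => toLex (q.length, weight D Z q))
    wellFounded_lt).has_min {q | D.OpenNonCausal X Y Z q} ⟨p, h⟩
  refine ⟨q, hq, fun r hr => ?_, fun r hr hlen => ?_⟩ <;> by_contra hlt <;>
    exact hmin r hr (Prod.Lex.lt_iff.mpr (by simp_all))

lemma not_exists_desc_of_isChain (hrep : RepresentedBy D G) (hforb : Z ∩ G.BForb X Y = ∅)
    (hp : D.ProperPathFromTo X Y p) (hc : p.IsChain D.dir) (hv : v ∈ p.tail) :
    ¬ ∃ w ∈ Z, D.Desc v w := by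
  rintro ⟨w, hw, hd⟩
  have hp' := hrep.properPathFromTo_iff.mp hp
  have : w ∈ Z ∩ G.BForb X Y :=
    ⟨hw, mem_bForb hrep hp' (bPossCausal_of_isChain hrep hp.1.1 hc) hv hd⟩
  simp [hforb] at this

lemma IsMinimalOpenNonCausal.not_adj_of_colliderAt (hD : D.IsDAG) (hrep : RepresentedBy D G)
    (hforb : Z ∩ G.BForb X Y = ∅) (hp : D.IsMinimalOpenNonCausal X Y Z (L ++ a :: c :: b :: R))
    (hcol : D.ColliderAt (a, c, b)) : ¬ D.adj a b := by
  intro hab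
  by_cases hq : (L ++ a :: b :: R).IsChain D.dir
  · obtain ⟨w, hw, hcw⟩ :=
      (hp.openNonCausal.2.2 _ (mem_triples_iff.mpr ⟨L, R, rfl⟩)).1 hcol
    exact not_exists_desc_of_isChain hrep hforb (hp.openNonCausal.1.shortcut (K := [c]) hab) hq
      (v := b) (by cases L <;> simp) ⟨w, hw, desc_of_dir_of_desc hcol.2 hcw⟩
  · have := hp.length_le _ (hp.openNonCausal.erase hD hab
      (fun x _ h _ => (dir_asymm hcol.1 h.2).elim) (fun y _ h _ => (dir_asymm hcol.2 h.1).elim) hq)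
    simp at this

lemma not_colliderAt_of_dir_of_isChain (hyx : D.dir y x) (hl : (y :: l).IsChain D.dir) :
    ∀ t ∈ triples (x :: y :: l), ¬ D.ColliderAt t := by
  intro t ht hcol
  rcases l with _ | ⟨z, l⟩
  · simp at ht
  rcases List.mem_cons.mp ht with rfl | ht
  · exact dir_asymm hyx hcol.1
  · exact dir_asymm (rel_of_mem_triples hl ht).2 hcol.2

lemma IsMinimalOpenNonCausal.not_adj_of_isChain_tail (hD : D.IsDAG)
    (hp : D.IsMinimalOpenNonCausal X Y Z (x :: y :: l)) (hyx : D.dir y x)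
    (hl : (y :: l).IsChain D.dir) : ∀ t ∈ triples (y :: l), ¬ D.adj t.1 t.2.2 := by
  rintro ⟨a, c, b⟩ ht hab
  obtain ⟨L, R, hL⟩ := mem_triples_iff.mp ht
  have hncol := not_colliderAt_of_dir_of_isChain hyx hl
  rw [show x :: y :: l = (x :: L) ++ a :: c :: b :: R by simp [hL]] at hp hncol
  have hhead : (L ++ a :: b :: R).head? = some y := by
    have := congrArg List.head? hL
    cases L <;> simp_all
  obtain ⟨l', hl'⟩ : ∃ l', L ++ a :: b :: R = y :: l' :=
    ⟨_, (List.cons_head?_tail hhead).symm⟩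
  have hq : ¬ (x :: L ++ a :: b :: R).IsChain D.dir := by
    rw [List.cons_append, hl', List.isChain_cons_cons]
    exact fun h => dir_asymm hyx h.1
  have := hp.length_le _ (hp.openNonCausal.erase hD hab
    (fun _ hx hcol _ => (hncol _ hx hcol).elim) (fun _ hy hcol _ => (hncol _ hy hcol).elim) hq)
  simp at this

lemma not_bBlocking_of_dir_head (hG : G.ClosedMeek) (hrep : RepresentedBy D G)
    (hp : D.ProperPathFromTo X Y (x :: (K ++ w :: l))) (hwx : G.dir w x)
    (hl : (w :: l).IsChain D.dir) (hunsh : ∀ t ∈ triples (w :: l), ¬ D.adj t.1 t.2.2)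
    (hZ : ∀ t ∈ triples (x :: (K ++ w :: l)), t.2.1 ∉ Z) : ¬ G.BBlocking X Y Z := by
  intro hblock
  have hq : G.ProperPathFromTo X Y (x :: w :: l) :=
    ProperPathFromTo.shortcut (L := []) (hrep.properPathFromTo_iff.mp hp)
      (adj_comm.mp (adj_of_dir hwx))
  have hsub : triples (w :: l) ⊆ triples (x :: (K ++ w :: l)) :=
    triples_subset_of_infix ⟨x :: K, [], by simp⟩
  have htail : ∀ t ∈ triples (w :: l), ¬ G.ColliderAt t ∧ G.DefNonColliderAt t := by
    rintro ⟨a, c, b⟩ ht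
    have hdir := rel_of_mem_triples hl ht
    have hncol : ¬ G.ColliderAt (a, c, b) := fun h => dir_asymm hdir.2 (hrep.dir h.2)
    exact ⟨hncol, hG.defNonColliderAt (hrep.adj_iff.mp (adj_of_dir hdir.1))
      (hrep.adj_iff.mp (adj_of_dir hdir.2)) (mt hrep.adj_iff.mpr (hunsh _ ht)) hncol⟩
  refine hblock _ hq ((bNonCausal_iff_not_bPossCausal hq.1).mpr fun h => ?_) (fun t ht => ?_)
    (fun t ht => ?_)
  · exact (List.rel_of_pairwise_cons (bPossCausal_iff.mp h).2 List.mem_cons_self) hwx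
  all_goals rcases l with _ | ⟨r, l⟩
  all_goals simp only [triples_pair, List.not_mem_nil, triples_cons_cons_cons,
    List.mem_cons] at ht
  all_goals rcases ht with rfl | ht
  · exact Or.inr (Or.inl hwx)
  · exact Or.inr (htail t ht).2
  · obtain ⟨K', k, hk⟩ := (List.eq_nil_or_concat' (x :: K)).resolve_left (by simp)
    refine ⟨fun h => (dir_asymm hwx h.1).elim, fun _ => hZ (k, w, r) ?_⟩
    exact mem_triples_iff.mpr ⟨K', l, by simp [← List.cons_append, hk]⟩
  · exact ⟨fun h => ((htail t ht).1 h).elim, fun _ => hZ t (hsub ht)⟩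

lemma IsMinimalOpenNonCausal.not_dir_of_isChain_tail (hG : G.ClosedMeek) (hD : D.IsDAG)
    (hrep : RepresentedBy D G) (hamen : G.BAmenable X Y) (hblock : G.BBlocking X Y Z)
    (hp : D.IsMinimalOpenNonCausal X Y Z (x :: y :: l)) (hl : (y :: l).IsChain D.dir) :
    ¬ D.dir y x := by
  intro hyx
  by_cases hback : ∃ w ∈ y :: l, G.dir w x
  · obtain ⟨w, hw, hwx⟩ := hback
    obtain ⟨K, l', hK⟩ := List.append_of_mem hw
    have hinfix : w :: l' <:+: y :: l := ⟨K, [], by simp [hK]⟩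
    have hncol := not_colliderAt_of_dir_of_isChain hyx hl
    refine not_bBlocking_of_dir_head hG hrep (hK ▸ hp.openNonCausal.1) hwx (hl.infix hinfix)
      (fun t ht => hp.not_adj_of_isChain_tail hD hyx hl t (triples_subset_of_infix hinfix ht))
      (fun t ht => (hp.openNonCausal.2.2 t (hK ▸ ht)).2 (hncol t (hK ▸ ht))) hblock
  · push Not at hback
    have hbp : G.BPossCausal (x :: y :: l) :=
      bPossCausal_iff.mpr ⟨hrep.isPath_iff.mp hp.openNonCausal.1.1,
        List.pairwise_cons.mpr ⟨hback, pairwise_not_dir_of_isChain hrep hl⟩⟩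
    exact dir_asymm hyx
      (hrep.dir (hamen _ (hrep.properPathFromTo_iff.mp hp.openNonCausal.1) hbp x y rfl rfl))

lemma IsMinimalOpenNonCausal.defNonColliderAt_of_adj (hG : G.ClosedMeek) (hD : D.IsDAG)
    (hrep : RepresentedBy D G) (hamen : G.BAmenable X Y) (hforb : Z ∩ G.BForb X Y = ∅)
    (hblock : G.BBlocking X Y Z) (hp : D.IsMinimalOpenNonCausal X Y Z (L ++ a :: c :: b :: R))
    (hab : D.adj a b) (hcol : ¬ D.ColliderAt (a, c, b)) : G.DefNonColliderAt (a, c, b) := by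
  by_contra hdef
  have hleft : ∀ x, (x, a, c) ∈ triples (L ++ a :: c :: b :: R) → D.ColliderAt (x, a, c) →
      D.dir a b → a ∉ Z := by
    intro x hx hxac _
    obtain ⟨L', R', hL'⟩ := mem_triples_iff.mp hx
    have hxc := (hL' ▸ hp).not_adj_of_colliderAt hD hrep hforb hxac
    exact (hdef (Or.inl (hrep.colliderAt hxac hxc).2)).elim
  have hright : ∀ y, (c, b, y) ∈ triples (L ++ a :: c :: b :: R) → D.ColliderAt (c, b, y) →
      D.dir b a → b ∉ Z := by
    intro y hy hcby _
    obtain ⟨L', R', hL'⟩ := mem_triples_iff.mp hy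
    have hcy := (hL' ▸ hp).not_adj_of_colliderAt hD hrep hforb hcby
    exact (hdef (Or.inr (Or.inl (hrep.colliderAt hcby hcy).1))).elim
  by_cases hq : (L ++ a :: b :: R).IsChain D.dir
  swap
  · have := hp.length_le _ (hp.openNonCausal.erase hD hab hleft hright hq)
    simp at this
  have hchain := (isPath_iff.mp hp.openNonCausal.1.1).2.2
  simp only [List.isChain_append_cons_cons, List.isChain_cons_cons] at hchain
  have hq' := hq
  simp only [List.isChain_append_cons_cons] at hq'
  rcases hD.dir_or_dir hchain.2.1 with hac | hca <;>
    rcases hD.dir_or_dir hchain.2.2.1 with hcb | hbc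
  · refine not_nonCausal_of_isChain ?_ hp.openNonCausal.2.1
    simp only [List.isChain_append_cons_cons, List.isChain_cons_cons]
    exact ⟨hq'.1, hac, hcb, hq'.2.2⟩
  · exact hcol ⟨hac, hbc⟩
  · rcases L.eq_nil_or_concat' with rfl | ⟨L, x, rfl⟩
    · exact hp.not_dir_of_isChain_tail hG hD hrep hamen hblock
        (List.isChain_cons_cons.mpr ⟨hcb, hq'.2.2⟩) hca
    · have hxa : D.dir x a := (List.isChain_append.mp hq'.1).2.2 x (by simp) a (by simp)
      obtain ⟨w, hw, haw⟩ := (hp.openNonCausal.2.2 (x, a, c)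
        (mem_triples_iff.mpr ⟨L, b :: R, by simp⟩)).1 ⟨hxa, hca⟩
      exact not_exists_desc_of_isChain hrep hforb (hp.openNonCausal.1.shortcut (K := [c]) hab) hq
        (v := a) (by cases L <;> simp) ⟨w, hw, haw⟩
  · exact not_dir_of_dir_of_dir hq'.2.1 hbc hca

/-- Depending on where `u` lies, rerouting the path through `u` gives a shorter witness, or one
of the same length and smaller weight. -/
lemma IsMinimalOpenNonCausal.false_of_reroute (hD : D.IsDAG) (hrep : RepresentedBy D G)
    (hforb : Z ∩ G.BForb X Y = ∅) (hp : D.IsMinimalOpenNonCausal X Y Z (L ++ a :: c :: b :: R))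
    (hac : D.dir a c) (hbc : D.dir b c) (hau : D.dir a u) (hbu : D.dir b u)
    (hu : ∃ w ∈ Z, D.Desc u w) (hdepth : depth D Z u < depth D Z c) : False := by
  have hp' := hp.openNonCausal
  by_cases hmem : u ∈ L ++ a :: c :: b :: R
  · have hua : u ≠ a := (dir_ne hau).symm
    have huc : u ≠ c := fun h => (h ▸ hdepth).false
    have hub : u ≠ b := (dir_ne hbu).symm
    simp only [List.mem_append, List.mem_cons, hua, huc, hub, false_or] at hmem
    rcases hmem with huL | huR
    · obtain ⟨L₁, L₂, rfl⟩ := List.append_of_mem huL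
      have := hp.length_le _ (OpenNonCausal.bypass_left (K := L₂ ++ [a]) (by simpa using hp')
        hbc hbu hu)
      simp at this
      omega
    · obtain ⟨R₁, R₂, rfl⟩ := List.append_of_mem huR
      have hp'' : D.OpenNonCausal X Y Z (L ++ a :: c :: ((b :: R₁) ++ u :: R₂)) := by
        simpa using hp'
      by_cases hq : (L ++ a :: u :: R₂).IsChain D.dir
      · exact not_exists_desc_of_isChain hrep hforb
          (hp''.1.shortcut (K := c :: b :: R₁) (adj_of_dir hau)) hq (by cases L <;> simp) hu
      · have := hp.length_le _ (hp''.bypass_right hD hac hau hu hq)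
        simp at this
        omega
  · by_cases huX : u ∈ X
    · have := hp.length_le _ (hp'.restart (fun h => hmem (by simp_all)) huX hbc hbu)
      simp at this
      omega
    · have := hp.weight_le _ (hp'.replace hmem huX hac hbc hau hbu hu) (by simp)
      simp [weight] at this
      omega

lemma IsMinimalOpenNonCausal.exists_desc_of_colliderAt (hG : G.ClosedMeek) (hD : D.IsDAG)
    (hrep : RepresentedBy D G) (hforb : Z ∩ G.BForb X Y = ∅)
    (hp : D.IsMinimalOpenNonCausal X Y Z (L ++ a :: c :: b :: R)) (hcol : D.ColliderAt (a, c, b)) :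
    ∃ w ∈ Z, G.Desc c w := by
  obtain ⟨w, hw, hcw⟩ := (hp.openNonCausal.2.2 _ (mem_triples_iff.mpr ⟨L, R, rfl⟩)).1 hcol
  have hGcol := hrep.colliderAt hcol (hp.not_adj_of_colliderAt hD hrep hforb hcol)
  rcases exists_undirE_of_reachesIn hG hD hrep (reachesIn_depth (exists_reachesIn_of_desc hcw hw))
    with h | ⟨u, m, hcu, hcu', hm, hu⟩
  · exact h
  exact (hp.false_of_reroute hD hrep hforb hcol.1 hcol.2
    (hrep.dir_of_dir_of_undirE hG hD hGcol.1 hcu hcu')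
    (hrep.dir_of_dir_of_undirE hG hD hGcol.2 hcu hcu')
    (exists_desc_of_reachesIn hu) ((depth_le hu).trans_lt hm)).elim

lemma IsMinimalOpenNonCausal.definiteStatus (hG : G.ClosedMeek) (hD : D.IsDAG)
    (hrep : RepresentedBy D G) (hamen : G.BAmenable X Y) (hforb : Z ∩ G.BForb X Y = ∅)
    (hblock : G.BBlocking X Y Z) (hp : D.IsMinimalOpenNonCausal X Y Z p) : G.DefiniteStatus p := by
  rintro ⟨a, c, b⟩ ht
  have hadj := rel_of_mem_triples (isPath_iff.mp hp.openNonCausal.1.1).2.2 ht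
  obtain ⟨L, R, rfl⟩ := mem_triples_iff.mp ht
  by_cases hcol : D.ColliderAt (a, c, b)
  · exact Or.inl (hrep.colliderAt hcol (hp.not_adj_of_colliderAt hD hrep hforb hcol))
  by_cases hab : D.adj a b
  · exact Or.inr (hp.defNonColliderAt_of_adj hG hD hrep hamen hforb hblock hab hcol)
  · exact Or.inr (hG.defNonColliderAt (hrep.adj_iff.mp hadj.1) (hrep.adj_iff.mp hadj.2)
      (mt hrep.adj_iff.mpr hab) fun h => hcol ⟨hrep.dir h.1, hrep.dir h.2⟩)

lemma IsMinimalOpenNonCausal.dConn (hG : G.ClosedMeek) (hD : D.IsDAG) (hrep : RepresentedBy D G)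
    (hforb : Z ∩ G.BForb X Y = ∅) (hp : D.IsMinimalOpenNonCausal X Y Z p) : G.DConn p Z := by
  rintro ⟨a, c, b⟩ ht
  have hopen : D.OpenTriple Z (a, c, b) := hp.openNonCausal.2.2 _ ht
  obtain ⟨L, R, rfl⟩ := mem_triples_iff.mp ht
  exact ⟨fun h => hp.exists_desc_of_colliderAt hG hD hrep hforb ⟨hrep.dir h.1, hrep.dir h.2⟩,
    fun h => hopen.2 fun hcol =>
      h (hrep.colliderAt hcol (hp.not_adj_of_colliderAt hD hrep hforb hcol))⟩

lemma OpenNonCausal.not_bPossCausal (hD : D.IsDAG) (hrep : RepresentedBy D G)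
    (hamen : G.BAmenable X Y) (hforb : Z ∩ G.BForb X Y = ∅) (hp : D.OpenNonCausal X Y Z p) :
    ¬ G.BPossCausal p := by
  intro hbp
  have hpG := hrep.properPathFromTo_iff.mp hp.1
  rcases hD.exists_colliderAt_of_nonCausal hp.2.1 with ⟨x, y, l, rfl, hyx⟩ | ⟨t, ht, hcol⟩
  · exact dir_asymm hyx (hrep.dir (hamen _ hpG hbp x y rfl rfl))
  · obtain ⟨w, hw, hd⟩ := (hp.2.2 t ht).1 hcol
    have : w ∈ Z ∩ G.BForb X Y :=
      ⟨hw, mem_bForb hrep hpG hbp (mem_tail_of_mem_triples ht) hd⟩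
    simp [hforb] at this

end Minimal

end PDAG

theorem stmt5_general {V : Type} (G : PDAG V) (hG : G.ClosedMeek) (X Y Z : Set V)
    (hamen : G.BAmenable X Y) (hforb : Z ∩ G.BForb X Y = ∅)
    (hblock : G.BBlocking X Y Z) :
    ∀ D : PDAG V, D.IsDAG → PDAG.RepresentedBy D G →
      ∀ p, D.ProperPathFromTo X Y p → D.NonCausal p → D.Blocked p Z := by
  intro D hD hrep p hp hnc hconn
  obtain ⟨q, hq⟩ := PDAG.exists_isMinimalOpenNonCausal ⟨hp, hnc, hconn⟩
  have hqG := hrep.properPathFromTo_iff.mp hq.openNonCausal.1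
  exact hblock q hqG
    ((PDAG.bNonCausal_iff_not_bPossCausal hqG.1).mpr
      (hq.openNonCausal.not_bPossCausal hD hrep hamen hforb))
    (hq.definiteStatus hG hD hrep hamen hforb hblock) (hq.dConn hG hD hrep hforb)

/-- under b-amenability and the b-forbidden set condition, if `Z` blocks all
proper b-non-causal definite status paths from `X` to `Y` in `G`, then in every DAG
represented by `G`, `Z` blocks every proper non-causal path from `X` to `Y`. -/
theorem stmt5 {V : Type} (G : PDAG V) (hG : G.ClosedMeek) (X Y Z : Set V)
    (hXY : Disjoint X Y) (hZ : Disjoint Z (X ∪ Y))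
    (hamen : G.BAmenable X Y) (hforb : Z ∩ G.BForb X Y = ∅)
    (hblock : G.BBlocking X Y Z) :
    ∀ D : PDAG V, D.IsDAG → PDAG.RepresentedBy D G →
      ∀ p, D.ProperPathFromTo X Y p → D.NonCausal p → D.Blocked p Z :=
  stmt5_general G hG X Y Z hamen hforb hblock
end
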